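/- arXiv:1612.04935 — 2 statements merged into one kernel-verified Lean document; each statement's English description precedes it below -/
import Mathlib

section
/- Let 1 ≤ r ≤ n and suppose Σ ⊆ I_r satisfies I_r = ⟨J_r ∪ Σ⟩ in (D_n, ⋄). Then for each 1 ≤ k ≤ r − 1 there exists σ ∈ Σ with dom(σ) = {1,...,n}, rank(σ) = k, and codom(σ) ≠ {1,...,n}. -/
namespace DRel

abbrev Rl (n : ℕ) := Fin n → Fin n → Prop

/-- Ordinary relational composition. -/
def rcomp {n : ℕ} (α β : Rl n) : Rl n := fun x y => ∃ z, α x z ∧ β z y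

/-- Converse relation. -/
def rinv {n : ℕ} (α : Rl n) : Rl n := fun x y => α y x

/-- α is difunctional iff α = α ∘ α⁻¹ ∘ α. -/
def IsDifunctional {n : ℕ} (α : Rl n) : Prop := rcomp α (rcomp (rinv α) α) = α

/-- The operation α ⋄ β = {(x,y) : xα = βy ≠ ∅}. -/
def dia {n : ℕ} (α β : Rl n) : Rl n :=
  fun x y => ({z | α x z} = {z | β z y} ∧ ∃ z, α x z)

def dom {n : ℕ} (α : Rl n) : Set (Fin n) := {x | ∃ y, α x y}

def codom {n : ℕ} (α : Rl n) : Set (Fin n) := {y | ∃ x, α x y}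

/-- The kernel of α: the set of blocks {x' : x'α = xα} for x in the domain. -/
def ker {n : ℕ} (α : Rl n) : Set (Set (Fin n)) :=
  {A | ∃ x, x ∈ dom α ∧ A = {x' | {z | α x' z} = {z | α x z}}}

def coker {n : ℕ} (α : Rl n) : Set (Set (Fin n)) := ker (rinv α)

/-- The rank of a difunctional relation: the number of blocks. -/
noncomputable def rnk {n : ℕ} (α : Rl n) : ℕ := (ker α).ncard

/-- Subset generated by A under a binary operation. -/
def Gen {T : Type*} (mul : T → T → T) (A : Set T) : Set T :=
  ⋂₀ {C : Set T | A ⊆ C ∧ ∀ a ∈ C, ∀ b ∈ C, mul a b ∈ C}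

/-- Stirling numbers of the second kind. -/
def stirling : ℕ → ℕ → ℕ
  | 0, 0 => 1
  | 0, _ + 1 => 0
  | _ + 1, 0 => 0
  | n + 1, k + 1 => (k + 1) * stirling n (k + 1) + stirling n k

/-- Green's R-preorder on (D_n, ⋄): α ∈ β S¹. -/
def leR {n : ℕ} (α β : Rl n) : Prop := α = β ∨ ∃ γ, IsDifunctional γ ∧ α = dia β γ

/-- Green's L-preorder on (D_n, ⋄): α ∈ S¹ β. -/
def leL {n : ℕ} (α β : Rl n) : Prop := α = β ∨ ∃ γ, IsDifunctional γ ∧ α = dia γ β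

/-- Green's J-preorder on (D_n, ⋄): α ∈ S¹ β S¹. -/
def leJ {n : ℕ} (α β : Rl n) : Prop :=
  α = β ∨ (∃ γ, IsDifunctional γ ∧ (α = dia β γ ∨ α = dia γ β)) ∨
    ∃ γ δ, IsDifunctional γ ∧ IsDifunctional δ ∧ α = dia (dia γ β) δ

/-- Membership in I_n: all blocks singletons, i.e. a partial injection graph. -/
def InI {n : ℕ} (γ : Rl n) : Prop :=
  (∀ x y y', γ x y → γ x y' → y = y') ∧ (∀ x x' y, γ x y → γ x' y → x = x')

/-- β = λ_𝐀 for the partition 𝐀 = (A 0, …, A (k-1)) of {1,…,n}, blocks ordered by minima. -/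
def IsLambda {n k : ℕ} (A : Fin k → Set (Fin n)) (β : Rl n) : Prop :=
  (∀ i, (A i).Nonempty) ∧ (∀ i j, i ≠ j → Disjoint (A i) (A j)) ∧ (⋃ i, A i) = Set.univ ∧
  (∀ i j : Fin k, i < j → ∃ m ∈ A i, ∀ x ∈ A j, m < x) ∧
  (∀ x y, β x y ↔ ∃ i : Fin k, x ∈ A i ∧ (y : ℕ) = (i : ℕ))

/-- β = ρ_𝐀 for the partition 𝐀 = (A 0, …, A (k-1)) of {1,…,n}, blocks ordered by minima. -/
def IsRho {n k : ℕ} (A : Fin k → Set (Fin n)) (β : Rl n) : Prop :=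
  (∀ i, (A i).Nonempty) ∧ (∀ i j, i ≠ j → Disjoint (A i) (A j)) ∧ (⋃ i, A i) = Set.univ ∧
  (∀ i j : Fin k, i < j → ∃ m ∈ A i, ∀ x ∈ A j, m < x) ∧
  (∀ x y, β x y ↔ ∃ i : Fin k, (x : ℕ) = (i : ℕ) ∧ y ∈ A i)


----------------------------------------------------------------
-- Auxiliary material for the proof of `stmt17`
----------------------------------------------------------------

lemma mem_Gen_of_mem {T : Type*} {mul : T → T → T} {A : Set T} {a : T} (ha : a ∈ A) :
    a ∈ Gen mul A := Set.mem_sInter.mpr fun _ hC => hC.1 ha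

lemma Gen_mul {T : Type*} {mul : T → T → T} {A : Set T} {a b : T}
    (ha : a ∈ Gen mul A) (hb : b ∈ Gen mul A) : mul a b ∈ Gen mul A :=
  Set.mem_sInter.mpr fun C hC =>
    hC.2 a (Set.mem_sInter.mp ha C hC) b (Set.mem_sInter.mp hb C hC)

lemma Gen_subset {T : Type*} {mul : T → T → T} {A C : Set T} (h1 : A ⊆ C)
    (h2 : ∀ a ∈ C, ∀ b ∈ C, mul a b ∈ C) : Gen mul A ⊆ C :=
  fun _ hx => Set.mem_sInter.mp hx C ⟨h1, h2⟩

lemma difun_trans {n : ℕ} {β : Rl n} (hβ : IsDifunctional β) {a b c d : Fin n}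
    (h1 : β a b) (h2 : β c b) (h3 : β c d) : β a d := by
  have h := congrFun (congrFun hβ a) d
  rw [← h]
  show ∃ z, β a z ∧ ∃ w, β w z ∧ β w d
  exact ⟨b, h1, c, h2, h3⟩

lemma block_eq {n : ℕ} {β : Rl n} (hβ : IsDifunctional β) {z y : Fin n} (hzy : β z y) :
    {z' | {w | β z' w} = {w | β z w}} = {z' | β z' y} := by
  ext z'
  simp only [Set.mem_setOf_eq]
  constructor
  · intro h
    exact (Set.ext_iff.mp h y).mpr hzy
  · intro h
    ext w
    simp only [Set.mem_setOf_eq]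
    exact ⟨fun hw => difun_trans hβ hzy h hw, fun hw => difun_trans hβ h hzy hw⟩

/-- domain-side blocks of `α`. -/
def rowBlock {n : ℕ} (α : Rl n) (x : Fin n) : Set (Fin n) := {x' | {z | α x' z} = {z | α x z}}

/-- the image of `x` under `α`. -/
def img {n : ℕ} (α : Rl n) (x : Fin n) : Set (Fin n) := {z | α x z}

/-- union of images over a set. -/
def unionImg {n : ℕ} (α : Rl n) (A : Set (Fin n)) : Set (Fin n) := ⋃ x ∈ A, {z | α x z}

lemma key {n : ℕ} {α β : Rl n} (hβ : IsDifunctional β)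
    (hdom : dom (dia α β) = Set.univ) :
    dom α = Set.univ ∧ rnk α = rnk (dia α β) ∧
      (codom α = Set.univ →
        dom β = Set.univ ∧ rnk β = rnk α ∧ codom β = codom (dia α β)) := by
  have hA : ∀ x : Fin n, ∃ y, ({z | α x z} = {z | β z y}) ∧ (∃ z, α x z) := by
    intro x
    have hx : x ∈ dom (dia α β) := by rw [hdom]; trivial
    exact hx
  have hdomα : dom α = Set.univ := Set.eq_univ_of_forall fun x => by
    obtain ⟨y, h1, h2⟩ := hA x
    exact h2
  have hrow : ∀ x x' : Fin n,
      ({y | dia α β x' y} = {y | dia α β x y}) ↔ ({z | α x' z} = {z | α x z}) := by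
    intro x x'
    constructor
    · intro h
      obtain ⟨y, h1, h2⟩ := hA x
      have hy : dia α β x y := ⟨h1, h2⟩
      have hy' : dia α β x' y := (Set.ext_iff.mp h y).mpr hy
      rw [hy'.1, ← h1]
    · intro h
      have hne : (∃ z, α x' z) ↔ (∃ z, α x z) :=
        ⟨fun ⟨z, hz⟩ => ⟨z, (Set.ext_iff.mp h z).mp hz⟩,
         fun ⟨z, hz⟩ => ⟨z, (Set.ext_iff.mp h z).mpr hz⟩⟩
      ext y
      show ({z | α x' z} = {z | β z y} ∧ ∃ z, α x' z) ↔
        ({z | α x z} = {z | β z y} ∧ ∃ z, α x z)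
      rw [h]
      exact and_congr Iff.rfl hne
  have hblocks : ∀ x : Fin n, {x' | {z | α x' z} = {z | α x z}}
      = {x' | {z | dia α β x' z} = {z | dia α β x z}} := by
    intro x
    ext x'
    exact (hrow x x').symm
  have hker : ker α = ker (dia α β) := by
    ext A
    constructor
    · rintro ⟨x, -, rfl⟩
      exact ⟨x, by rw [hdom]; trivial, hblocks x⟩
    · rintro ⟨x, -, rfl⟩
      exact ⟨x, by rw [hdomα]; trivial, (hblocks x).symm⟩
  refine ⟨hdomα, by show (ker α).ncard = (ker (dia α β)).ncard; rw [hker], ?_⟩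
  intro hcod
  have hB : ∀ z : Fin n, ∃ x, α x z := by
    intro z
    have : z ∈ codom α := by rw [hcod]; trivial
    exact this
  have hdomβ : dom β = Set.univ := Set.eq_univ_of_forall (by
    intro z
    obtain ⟨x, hx⟩ := hB z
    obtain ⟨y, h1, -⟩ := hA x
    exact ⟨y, (Set.ext_iff.mp h1 z).mp hx⟩)
  have hkerβ : ker β = Set.range (img α) := by
    ext A
    constructor
    · rintro ⟨z, -, rfl⟩
      obtain ⟨x, hx⟩ := hB z
      obtain ⟨y, h1, -⟩ := hA x
      have hzy : β z y := (Set.ext_iff.mp h1 z).mp hx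
      refine ⟨x, ?_⟩
      show {z | α x z} = {z' | {w | β z' w} = {w | β z w}}
      rw [block_eq hβ hzy]
      exact h1
    · rintro ⟨x, rfl⟩
      obtain ⟨y, h1, z, hz⟩ := hA x
      have hzy : β z y := (Set.ext_iff.mp h1 z).mp hz
      refine ⟨z, ⟨y, hzy⟩, ?_⟩
      show {z | α x z} = {z' | {w | β z' w} = {w | β z w}}
      rw [block_eq hβ hzy]
      exact h1
  have hkerα : ker α = Set.range (rowBlock α) := by
    ext A
    constructor
    · rintro ⟨x, -, rfl⟩
      exact ⟨x, rfl⟩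
    · rintro ⟨x, rfl⟩
      exact ⟨x, by rw [hdomα]; trivial, rfl⟩
  have hg : ∀ x : Fin n, unionImg α (rowBlock α x) = img α x := by
    intro x
    apply Set.Subset.antisymm
    · intro z hz
      simp only [unionImg, Set.mem_iUnion, exists_prop] at hz
      obtain ⟨x', hx', hz⟩ := hz
      have hx'' : {z | α x' z} = {z | α x z} := hx'
      exact (Set.ext_iff.mp hx'' z).mp hz
    · intro z hz
      have : x ∈ rowBlock α x := rfl
      exact Set.mem_biUnion this hz
  have hinj : Set.InjOn (unionImg α) (Set.range (rowBlock α)) := by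
    rintro A ⟨x, rfl⟩ B ⟨x', rfl⟩ hAB
    rw [hg x, hg x'] at hAB
    show {x'' | {z | α x'' z} = {z | α x z}} = {x'' | {z | α x'' z} = {z | α x' z}}
    have hAB' : {z | α x z} = {z | α x' z} := hAB
    rw [hAB']
  have himg : unionImg α '' Set.range (rowBlock α) = Set.range (img α) := by
    have hcomp : unionImg α ∘ rowBlock α = img α := funext hg
    rw [← Set.range_comp, hcomp]
  have hrnkβ : rnk β = rnk α := by
    show (ker β).ncard = (ker α).ncard
    rw [hkerβ, hkerα, ← himg, Set.ncard_image_of_injOn hinj]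
  have hcodβ : codom β = codom (dia α β) := by
    ext y
    constructor
    · rintro ⟨z, hzy⟩
      obtain ⟨x, hx⟩ := hB z
      obtain ⟨y', h1, h2⟩ := hA x
      have hzy' : β z y' := (Set.ext_iff.mp h1 z).mp hx
      have hT : ({z' | β z' y} : Set (Fin n)) = {z' | β z' y'} := by
        rw [← block_eq hβ hzy, ← block_eq hβ hzy']
      refine ⟨x, ?_, h2⟩
      rw [h1, ← hT]
    · rintro ⟨x, h1, h2⟩
      obtain ⟨z, hz⟩ := h2
      exact ⟨z, (Set.ext_iff.mp h1 z).mp hz⟩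
  exact ⟨hdomβ, hrnkβ, hcodβ⟩

lemma main_ind (n r k : ℕ) (hkr : k < r) (Sig : Set (Rl n))
    (hgen : Gen dia ({α : Rl n | IsDifunctional α ∧ rnk α = r} ∪ Sig)
      = {α : Rl n | IsDifunctional α ∧ rnk α ≤ r}) :
    ∀ τ ∈ Gen dia ({α : Rl n | IsDifunctional α ∧ rnk α = r} ∪ Sig),
      dom τ = Set.univ → rnk τ = k → codom τ ≠ Set.univ →
      ∃ σ ∈ Sig, dom σ = Set.univ ∧ rnk σ = k ∧ codom σ ≠ Set.univ := by
  have hC : Gen dia ({α : Rl n | IsDifunctional α ∧ rnk α = r} ∪ Sig) ⊆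
      {τ | τ ∈ Gen dia ({α : Rl n | IsDifunctional α ∧ rnk α = r} ∪ Sig) ∧
        (dom τ = Set.univ → rnk τ = k → codom τ ≠ Set.univ →
          ∃ σ ∈ Sig, dom σ = Set.univ ∧ rnk σ = k ∧ codom σ ≠ Set.univ)} := by
    apply Gen_subset
    · intro g hg
      refine ⟨mem_Gen_of_mem hg, fun hd hrg hc => ?_⟩
      rcases hg with hg | hg
      · exact absurd hrg (by have := hg.2; omega)
      · exact ⟨g, hg, hd, hrg, hc⟩
    · rintro a ⟨haG, ha⟩ b ⟨hbG, hb⟩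
      refine ⟨Gen_mul haG hbG, fun hd hrd hc => ?_⟩
      have hbI : b ∈ {α : Rl n | IsDifunctional α ∧ rnk α ≤ r} := by
        rw [← hgen]; exact hbG
      obtain ⟨hdoma, hra, hrest⟩ := key hbI.1 hd
      by_cases hca : codom a = Set.univ
      · obtain ⟨hdb, hrb, hcb⟩ := hrest hca
        exact hb hdb (by rw [hrb, hra]; exact hrd) (by rw [hcb]; exact hc)
      · exact ha hdoma (by rw [hra]; exact hrd) hca
  intro τ hτ hd hr hc
  exact (hC hτ).2 hd hr hc

lemma singleton_row_eq {T : Type*} (a b : T) :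
    ({z | z = a} = {z | z = b}) ↔ a = b :=
  ⟨fun h => (Set.ext_iff.mp h a).mp rfl, fun h => by rw [h]⟩

/-- the function `x ↦ min x (k-1)` on `Fin n`. -/
def wfun (n k : ℕ) (h : k - 1 < n) : Fin n → Fin n :=
  fun x => ⟨min (x : ℕ) (k - 1), lt_of_le_of_lt (min_le_right _ _) h⟩

/-- its graph, a full-domain rank-`k` difunctional relation. -/
def wrel (n k : ℕ) (h : k - 1 < n) : Rl n := fun x y => y = wfun n k h x

/-- the `i`-th kernel block of `wrel`. -/
def blk (n k : ℕ) (i : Fin k) : Set (Fin n) := {x : Fin n | min (x : ℕ) (k - 1) = (i : ℕ)}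

lemma wrel_difun (n k : ℕ) (h : k - 1 < n) : IsDifunctional (wrel n k h) := by
  have hiff : ∀ x y : Fin n,
      (∃ z, z = wfun n k h x ∧ ∃ w, z = wfun n k h w ∧ y = wfun n k h w) ↔
        y = wfun n k h x := by
    intro x y
    constructor
    · rintro ⟨z, hz, w, hw, hy⟩
      rw [hy, ← hw]
      exact hz
    · rintro rfl
      exact ⟨wfun n k h x, rfl, x, rfl, rfl⟩
  unfold IsDifunctional
  funext x y
  exact propext (hiff x y)

lemma wrel_dom (n k : ℕ) (h : k - 1 < n) : dom (wrel n k h) = Set.univ :=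
  Set.eq_univ_of_forall fun x => ⟨wfun n k h x, rfl⟩

lemma wrel_codom (n k : ℕ) (h : k - 1 < n) (hk1 : 1 ≤ k) (hkn : k < n) :
    codom (wrel n k h) ≠ Set.univ := by
  intro hcon
  have hmem : (⟨n - 1, by omega⟩ : Fin n) ∈ codom (wrel n k h) := by rw [hcon]; trivial
  obtain ⟨x, hx⟩ := hmem
  have hval : n - 1 = min (x : ℕ) (k - 1) := congrArg Fin.val hx
  have := min_le_right (x : ℕ) (k - 1)
  omega

lemma wrel_rnk (n k : ℕ) (h : k - 1 < n) (hk1 : 1 ≤ k) (hkn : k < n) :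
    rnk (wrel n k h) = k := by
  have hblk : ker (wrel n k h) = Set.range (blk n k) := by
    ext A
    constructor
    · rintro ⟨x, -, rfl⟩
      refine ⟨⟨min (x : ℕ) (k - 1), by omega⟩, ?_⟩
      ext x'
      show min (x' : ℕ) (k - 1) = min (x : ℕ) (k - 1) ↔
        {z | wrel n k h x' z} = {z | wrel n k h x z}
      rw [show ({z | wrel n k h x' z} : Set (Fin n)) = {z | z = wfun n k h x'} from rfl,
        show ({z | wrel n k h x z} : Set (Fin n)) = {z | z = wfun n k h x} from rfl,
        singleton_row_eq]
      constructor
      · intro hx'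
        exact Fin.ext hx'
      · intro hx'
        exact congrArg Fin.val hx'
    · rintro ⟨i, rfl⟩
      have hik : (i : ℕ) < k := i.isLt
      refine ⟨⟨(i : ℕ), by omega⟩, ⟨wfun n k h ⟨(i : ℕ), by omega⟩, rfl⟩, ?_⟩
      ext x'
      show min (x' : ℕ) (k - 1) = (i : ℕ) ↔
        {z | wrel n k h x' z} = {z | wrel n k h ⟨(i : ℕ), by omega⟩ z}
      rw [show ({z | wrel n k h x' z} : Set (Fin n)) = {z | z = wfun n k h x'} from rfl,
        show ({z | wrel n k h ⟨(i : ℕ), by omega⟩ z} : Set (Fin n))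
          = {z | z = wfun n k h ⟨(i : ℕ), by omega⟩} from rfl,
        singleton_row_eq]
      constructor
      · intro hx'
        apply Fin.ext
        show min (x' : ℕ) (k - 1) = min (i : ℕ) (k - 1)
        omega
      · intro hx'
        have h2 : min (x' : ℕ) (k - 1) = min (i : ℕ) (k - 1) := congrArg Fin.val hx'
        omega
  have hinj : Function.Injective (blk n k) := by
    intro i j hij
    have hik : (i : ℕ) < k := i.isLt
    have hjk : (j : ℕ) < k := j.isLt
    have hi : (⟨(i : ℕ), by omega⟩ : Fin n) ∈ blk n k i := by
      show min ((i : ℕ)) (k - 1) = (i : ℕ)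
      omega
    rw [hij] at hi
    have : min ((i : ℕ)) (k - 1) = (j : ℕ) := hi
    apply Fin.ext
    omega
  show (ker (wrel n k h)).ncard = k
  rw [hblk, ← Set.image_univ, Set.ncard_image_of_injective _ hinj, Set.ncard_univ]
  simp

/-- If I_r = ⟨J_r ∪ Σ⟩ then for each 1 ≤ k ≤ r−1 there is σ ∈ Σ with full domain,
rank k, and codomain a proper subset of {1,…,n}. -/
theorem stmt17 (n r : ℕ) (hr1 : 1 ≤ r) (hrn : r ≤ n) (Sig : Set (Rl n))
    (hSig : Sig ⊆ {α | IsDifunctional α ∧ rnk α ≤ r})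
    (hgen : Gen dia ({α : Rl n | IsDifunctional α ∧ rnk α = r} ∪ Sig)
      = {α : Rl n | IsDifunctional α ∧ rnk α ≤ r}) :
    ∀ k : ℕ, 1 ≤ k → k ≤ r - 1 →
      ∃ σ ∈ Sig, dom σ = Set.univ ∧ rnk σ = k ∧ codom σ ≠ Set.univ := by
  intro k hk1 hk2
  have hkn : k < n := by omega
  have hk1n : k - 1 < n := by omega
  have hτG : wrel n k hk1n ∈ Gen dia ({α : Rl n | IsDifunctional α ∧ rnk α = r} ∪ Sig) := by
    rw [hgen]
    exact ⟨wrel_difun n k hk1n, by rw [wrel_rnk n k hk1n hk1 hkn]; omega⟩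
  exact main_ind n r k (by omega) Sig hgen (wrel n k hk1n) hτG (wrel_dom n k hk1n)
    (wrel_rnk n k hk1n hk1 hkn) (wrel_codom n k hk1n hk1 hkn)

end DRel
end

section
/- Let 1 ≤ r ≤ n and suppose Σ ⊆ I_r satisfies I_r = ⟨J_r ∪ Σ⟩ in (D_n, ⋄). Then for every partition 𝐀 of {1,...,n} into at most r − 1 blocks, there exist σ, τ ∈ Σ with ker(σ) = 𝐀 and coker(τ) = 𝐀. -/
namespace DRel

lemma gen_subset_aux {T : Type*} (mul : T → T → T) (A : Set T) (C : Set T)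
    (h1 : A ⊆ C) (h2 : ∀ a ∈ C, ∀ b ∈ C, mul a b ∈ C) : Gen mul A ⊆ C :=
  Set.sInter_subset_of_mem ⟨h1, h2⟩

lemma ker_dia_subset {n : ℕ} (α β : Rl n) : ker (dia α β) ⊆ ker α := by
  rintro A ⟨x, ⟨y, hxy⟩, rfl⟩
  obtain ⟨hset, z0, hz0⟩ := hxy
  refine ⟨x, ⟨z0, hz0⟩, ?_⟩
  ext x'
  simp only [Set.mem_setOf_eq]
  constructor
  · intro h
    have hx'y : dia α β x' y := by
      have hmem : y ∈ {z | dia α β x z} := ⟨hset, z0, hz0⟩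
      rw [← h] at hmem; exact hmem
    rw [hx'y.1, ← hset]
  · intro h
    ext y'
    simp only [Set.mem_setOf_eq, dia]
    constructor
    · rintro ⟨hs, z, hz⟩
      refine ⟨by rw [← h]; exact hs, z, ?_⟩
      have hz2 : z ∈ {w | α x' w} := hz
      rw [h] at hz2
      exact hz2
    · rintro ⟨hs, z, hz⟩
      refine ⟨by rw [h]; exact hs, z, ?_⟩
      have hz2 : z ∈ {w | α x w} := hz
      rw [← h] at hz2
      exact hz2

lemma rinv_dia {n : ℕ} (α β : Rl n) : rinv (dia α β) = dia (rinv β) (rinv α) := by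
  funext y x
  simp only [rinv, dia]
  apply propext
  constructor
  · rintro ⟨hs, z, hz⟩
    refine ⟨hs.symm, z, ?_⟩
    have : z ∈ {w | β w y} := by rw [← hs]; exact hz
    exact this
  · rintro ⟨hs, z, hz⟩
    refine ⟨hs.symm, z, ?_⟩
    have hz2 : z ∈ {w | β w y} := hz
    rw [hs] at hz2
    exact hz2

lemma coker_dia_subset {n : ℕ} (α β : Rl n) : coker (dia α β) ⊆ coker β := by
  show ker (rinv (dia α β)) ⊆ ker (rinv β)
  rw [rinv_dia]
  exact ker_dia_subset _ _

lemma ker_block_eq {n : ℕ} {γ : Rl n} {A B : Set (Fin n)} (hA : A ∈ ker γ) (hB : B ∈ ker γ)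
    {b : Fin n} (hbA : b ∈ A) (hbB : b ∈ B) : A = B := by
  obtain ⟨x, hx, rfl⟩ := hA
  obtain ⟨y, hy, rfl⟩ := hB
  simp only [Set.mem_setOf_eq] at hbA hbB
  ext x'
  simp only [Set.mem_setOf_eq]
  rw [← hbA, ← hbB]

lemma dif_col {n : ℕ} {h : Rl n} (hd : IsDifunctional h) {x y y' : Fin n}
    (h1 : h x y) (h2 : h x y') : {w | h w y} = {w | h w y'} := by
  ext w
  simp only [Set.mem_setOf_eq]
  constructor
  · intro hw
    have : rcomp h (rcomp (rinv h) h) w y' := ⟨y, hw, x, h1, h2⟩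
    rwa [hd] at this
  · intro hw
    have : rcomp h (rcomp (rinv h) h) w y := ⟨y', hw, x, h2, h1⟩
    rwa [hd] at this

lemma coker_ncard {n : ℕ} {h : Rl n} (hd : IsDifunctional h) :
    (coker h).ncard = (ker h).ncard := by
  classical
  set F : Set (Fin n) → Set (Fin n) := fun A => {y | ∃ x ∈ A, h x y} with hF
  have hFA : ∀ x : Fin n, F {x' | {z | h x' z} = {z | h x z}} = {z | h x z} := by
    intro x
    ext y
    simp only [hF, Set.mem_setOf_eq]
    constructor
    · rintro ⟨x', hx', hy⟩
      have : y ∈ {z | h x z} := by rw [← hx']; exact hy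
      exact this
    · intro hy; exact ⟨x, rfl, hy⟩
  have himg : coker h = F '' ker h := by
    ext B
    constructor
    · rintro ⟨y, ⟨x, hxy⟩, rfl⟩
      refine ⟨{x' | {z | h x' z} = {z | h x z}}, ⟨x, ⟨y, hxy⟩, rfl⟩, ?_⟩
      rw [hFA]
      ext y'
      simp only [Set.mem_setOf_eq, rinv]
      constructor
      · intro hxy'
        exact (dif_col hd hxy hxy').symm
      · intro hcol
        have : x ∈ {w | h w y'} := by rw [hcol]; exact hxy
        exact this
    · rintro ⟨A, ⟨x, ⟨y, hxy⟩, rfl⟩, rfl⟩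
      rw [hFA]
      refine ⟨y, ⟨x, hxy⟩, ?_⟩
      ext y'
      simp only [Set.mem_setOf_eq, rinv]
      constructor
      · intro hxy'
        exact (dif_col hd hxy hxy').symm
      · intro hcol
        have : x ∈ {w | h w y'} := by rw [hcol]; exact hxy
        exact this
  rw [himg]
  apply Set.ncard_image_of_injOn
  rintro A ⟨x1, hx1, rfl⟩ B ⟨x2, hx2, rfl⟩ hFAB
  rw [hFA, hFA] at hFAB
  ext x'
  simp only [Set.mem_setOf_eq]
  rw [hFAB]

/-- If I_r = ⟨J_r ∪ Σ⟩ then for every partition 𝐀 of {1,…,n} into at most r−1 blocks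
there exist σ, τ ∈ Σ with ker(σ) = 𝐀 and coker(τ) = 𝐀. -/
theorem stmt18 (n r : ℕ) (hr1 : 1 ≤ r) (hrn : r ≤ n) (Sig : Set (Rl n))
    (hSig : Sig ⊆ {α | IsDifunctional α ∧ rnk α ≤ r})
    (hgen : Gen dia ({α : Rl n | IsDifunctional α ∧ rnk α = r} ∪ Sig)
      = {α : Rl n | IsDifunctional α ∧ rnk α ≤ r}) :
    ∀ P : Set (Set (Fin n)),
      (∀ A ∈ P, A.Nonempty) → (∀ A ∈ P, ∀ B ∈ P, A ≠ B → Disjoint A B) →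
      ⋃₀ P = Set.univ → P.ncard ≤ r - 1 →
      ∃ σ ∈ Sig, ∃ τ ∈ Sig, ker σ = P ∧ coker τ = P := by
  intro P hne hdisj hcover hcard
  classical
  set G : Set (Rl n) := {α : Rl n | IsDifunctional α ∧ rnk α = r} ∪ Sig with hG
  set α : Rl n := fun x y => ∃ A ∈ P, x ∈ A ∧ y ∈ A with hα
  have hsymm : rinv α = α := by
    funext x y
    apply propext
    constructor <;> rintro ⟨A, hA, h1, h2⟩ <;> exact ⟨A, hA, h2, h1⟩
  have hmem : ∀ x : Fin n, ∃ A ∈ P, x ∈ A := by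
    intro x
    have : x ∈ ⋃₀ P := by rw [hcover]; trivial
    exact this
  have hrow : ∀ {x : Fin n} {A : Set (Fin n)}, A ∈ P → x ∈ A → {z | α x z} = A := by
    intro x A hA hx
    ext z
    simp only [Set.mem_setOf_eq, hα]
    constructor
    · rintro ⟨B, hB, hxB, hzB⟩
      by_cases hAB : A = B
      · exact hAB ▸ hzB
      · exact absurd hxB (Set.disjoint_left.mp (hdisj A hA B hB hAB) hx)
    · intro hz; exact ⟨A, hA, hx, hz⟩
  have hblock : ∀ {x : Fin n} {A : Set (Fin n)}, A ∈ P → x ∈ A →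
      {x' | {z | α x' z} = {z | α x z}} = A := by
    intro x A hA hx
    ext x'
    simp only [Set.mem_setOf_eq, hrow hA hx]
    constructor
    · intro hrx'
      obtain ⟨B, hB, hx'B⟩ := hmem x'
      rw [hrow hB hx'B] at hrx'
      exact hrx' ▸ hx'B
    · intro hx'A
      exact hrow hA hx'A
  have hkerα : ker α = P := by
    ext A
    constructor
    · rintro ⟨x, _, rfl⟩
      obtain ⟨B, hB, hxB⟩ := hmem x
      rw [hblock hB hxB]
      exact hB
    · intro hA
      obtain ⟨a, ha⟩ := hne A hA
      exact ⟨a, ⟨a, A, hA, ha, ha⟩, (hblock hA ha).symm⟩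
  have hdifα : IsDifunctional α := by
    funext x y
    apply propext
    constructor
    · rintro ⟨z, hxz, w, hwz, hwy⟩
      obtain ⟨A, hA, hxA, hzA⟩ := hxz
      obtain ⟨B, hB, hwB, hzB⟩ := hwz
      obtain ⟨C, hC, hwC, hyC⟩ := hwy
      have hAB : A = B := by
        by_contra hne'
        exact Set.disjoint_left.mp (hdisj A hA B hB hne') hzA hzB
      have hBC : B = C := by
        by_contra hne'
        exact Set.disjoint_left.mp (hdisj B hB C hC hne') hwB hwC
      exact ⟨A, hA, hxA, by rw [hAB, hBC]; exact hyC⟩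
    · rintro ⟨A, hA, hxA, hyA⟩
      exact ⟨y, ⟨A, hA, hxA, hyA⟩, y, ⟨A, hA, hyA, hyA⟩, ⟨A, hA, hyA, hyA⟩⟩
  have hrnkα : rnk α ≤ r := by
    show (ker α).ncard ≤ r
    rw [hkerα]
    omega
  have hαgen : α ∈ Gen dia G := by
    rw [hG, hgen]
    exact ⟨hdifα, hrnkα⟩
  set C : Set (Rl n) :=
    {γ | (∃ g ∈ G, ker γ ⊆ ker g) ∧ (∃ h ∈ G, coker γ ⊆ coker h)} with hC
  have hsub : Gen dia G ⊆ C := by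
    apply gen_subset_aux
    · intro g hg
      exact ⟨⟨g, hg, subset_rfl⟩, ⟨g, hg, subset_rfl⟩⟩
    · rintro a ⟨⟨g, hg, hag⟩, _⟩ b ⟨_, ⟨h, hh, hbh⟩⟩
      exact ⟨⟨g, hg, (ker_dia_subset a b).trans hag⟩,
             ⟨h, hh, (coker_dia_subset a b).trans hbh⟩⟩
  obtain ⟨⟨g, hg, hkg⟩, ⟨h, hh, hch⟩⟩ := hsub hαgen
  rw [hkerα] at hkg
  have hcokerα : coker α = P := by
    show ker (rinv α) = P
    rw [hsymm, hkerα]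
  rw [hcokerα] at hch
  -- ker g = P
  have hkgP : ker g = P := by
    apply Set.Subset.antisymm _ hkg
    rintro B ⟨x, hx, rfl⟩
    obtain ⟨A, hA, hxA⟩ := hmem x
    have hAk : A ∈ ker g := hkg hA
    have hBk : {x' | {z | g x' z} = {z | g x z}} ∈ ker g := ⟨x, hx, rfl⟩
    have hxB : x ∈ {x' | {z | g x' z} = {z | g x z}} := rfl
    rw [ker_block_eq hAk hBk hxA hxB] at hA
    exact hA
  have hchP : coker h = P := by
    apply Set.Subset.antisymm _ hch
    rintro B ⟨y, hy, rfl⟩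
    obtain ⟨A, hA, hyA⟩ := hmem y
    have hAk : A ∈ ker (rinv h) := hch hA
    have hBk : {y' | {z | rinv h y' z} = {z | rinv h y z}} ∈ ker (rinv h) := ⟨y, hy, rfl⟩
    have hyB : y ∈ {y' | {z | rinv h y' z} = {z | rinv h y z}} := rfl
    rw [ker_block_eq hAk hBk hyA hyB] at hA
    exact hA
  have hgSig : g ∈ Sig := by
    rcases hg with hgJ | hgS
    · exfalso
      have : rnk g = r := hgJ.2
      have h2 : (ker g).ncard = r := this
      rw [hkgP] at h2
      omega
    · exact hgS
  have hhSig : h ∈ Sig := by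
    rcases hh with hhJ | hhS
    · exfalso
      have h1 : (coker h).ncard = (ker h).ncard := coker_ncard hhJ.1
      have h2 : rnk h = r := hhJ.2
      rw [hchP] at h1
      have : (ker h).ncard = r := h2
      omega
    · exact hhS
  exact ⟨g, hgSig, h, hhSig, hkgP, hchP⟩

end DRel
end
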